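/- arXiv:0809.4019 — 2 statements merged into one kernel-verified Lean document; each statement's English description precedes it below -/
import Mathlib

section
/- Let X₁, …, X_N be independent nonnegative real-valued random variables with E[X_i²] < ∞, and let S = X₁ + ⋯ + X_N. Then for every x > 0, Pr[S ≤ E[S] − N·x] ≤ exp(−N²·x²/(2·∑_{i=1}^N E[X_i²])). -/
/-! For `X ≥ 0` and `t ≥ 0` one has `exp (-t X) ≤ 1 - t X + t² X² / 2`, hence
`E[exp (-t Xᵢ)] ≤ exp (-t E[Xᵢ] + t² E[Xᵢ²] / 2)`: only second moments are needed because the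
lower tail of a nonnegative variable is controlled by the quadratic Taylor bound. Multiplying over
independent summands bounds the moment generating function of `S` at `-t`, and Chernoff's bound
at `t = N x / ∑ E[Xᵢ²]` gives the claim. -/

open MeasureTheory ProbabilityTheory Real

lemma Real.exp_neg_le_one_sub_add_sq_div_two {y : ℝ} (hy : 0 ≤ y) :
    exp (-y) ≤ 1 - y + y ^ 2 / 2 := by
  have hquad : 1 + y + y ^ 2 / 2 ≤ exp y := quadratic_le_exp_of_nonneg hy
  have hinv : exp (-y) * exp y = 1 := by rw [← exp_add, neg_add_cancel, exp_zero]
  -- `(1 - y + y²/2)(1 + y + y²/2) = 1 + y⁴/4 ≥ 1 = exp (-y) exp y`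
  nlinarith [exp_pos (-y), sq_nonneg (y ^ 2)]

section

variable {Ω : Type*} [MeasurableSpace Ω] {μ : Measure Ω}

namespace MeasureTheory

lemma integrable_exp_neg_mul_of_nonneg [IsFiniteMeasure μ] {X : Ω → ℝ}
    (hX : AEMeasurable X μ) (hX0 : ∀ᵐ ω ∂μ, 0 ≤ X ω) {t : ℝ} (ht : 0 ≤ t) :
    Integrable (fun ω => exp (-t * X ω)) μ := by
  refine (integrable_const (1 : ℝ)).mono' (hX.const_mul (-t)).exp.aestronglyMeasurable ?_
  filter_upwards [hX0] with ω hω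
  rw [norm_eq_abs, abs_exp, exp_le_one_iff]
  nlinarith

lemma Integrable.of_integrable_sq [IsFiniteMeasure μ] {X : Ω → ℝ} (hX : AEMeasurable X μ)
    (hX2 : Integrable (fun ω => X ω ^ 2) μ) : Integrable X μ :=
  ((memLp_two_iff_integrable_sq hX.aestronglyMeasurable).2 hX2).integrable one_le_two

end MeasureTheory

namespace ProbabilityTheory

lemma mgf_neg_le_exp_of_nonneg [IsProbabilityMeasure μ] {X : Ω → ℝ} (hX : AEMeasurable X μ)
    (hX0 : ∀ᵐ ω ∂μ, 0 ≤ X ω) (hX2 : Integrable (fun ω => X ω ^ 2) μ) {t : ℝ} (ht : 0 ≤ t) :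
    mgf X μ (-t) ≤ exp (-t * μ[X] + t ^ 2 * μ[fun ω => X ω ^ 2] / 2) := by
  have hlin : Integrable (fun ω => 1 - t * X ω) μ :=
    (integrable_const 1).sub ((Integrable.of_integrable_sq hX hX2).const_mul t)
  have hquad : Integrable (fun ω => t ^ 2 * X ω ^ 2 / 2) μ := (hX2.const_mul (t ^ 2)).div_const 2
  calc mgf X μ (-t) = ∫ ω, exp (-(t * X ω)) ∂μ := by simp only [mgf, neg_mul]
    _ ≤ ∫ ω, (1 - t * X ω + t ^ 2 * X ω ^ 2 / 2) ∂μ := by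
      refine integral_mono_ae ?_ (hlin.add hquad) ?_
      · simpa only [neg_mul] using integrable_exp_neg_mul_of_nonneg hX hX0 ht
      · filter_upwards [hX0] with ω hω
        simpa only [mul_pow] using exp_neg_le_one_sub_add_sq_div_two (mul_nonneg ht hω)
    _ = 1 - t * μ[X] + t ^ 2 * μ[fun ω => X ω ^ 2] / 2 := by
      rw [integral_add hlin hquad, integral_sub (integrable_const 1)
        ((Integrable.of_integrable_sq hX hX2).const_mul t)]
      simp only [integral_const, probReal_univ, smul_eq_mul, one_mul, integral_const_mul,
        integral_div]
    _ ≤ _ := by linarith [add_one_le_exp (-t * μ[X] + t ^ 2 * μ[fun ω => X ω ^ 2] / 2)]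

lemma iIndepFun.mgf_neg_sum_le_exp_of_nonneg [IsProbabilityMeasure μ] {ι : Type*}
    {X : ι → Ω → ℝ} (hindep : iIndepFun X μ) (hX : ∀ i, AEMeasurable (X i) μ)
    (hX0 : ∀ i, ∀ᵐ ω ∂μ, 0 ≤ X i ω) (hX2 : ∀ i, Integrable (fun ω => X i ω ^ 2) μ)
    (s : Finset ι) {t : ℝ} (ht : 0 ≤ t) :
    mgf (∑ i ∈ s, X i) μ (-t) ≤
      exp (-t * μ[∑ i ∈ s, X i] + t ^ 2 * (∑ i ∈ s, μ[fun ω => X i ω ^ 2]) / 2) := by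
  have hmean : μ[∑ i ∈ s, X i] = ∑ i ∈ s, μ[X i] := by
    simpa only [Finset.sum_apply] using
      integral_finsetSum s fun i _ => Integrable.of_integrable_sq (hX i) (hX2 i)
  calc mgf (∑ i ∈ s, X i) μ (-t) = ∏ i ∈ s, mgf (X i) μ (-t) := hindep.mgf_sum₀ hX s
    _ ≤ ∏ i ∈ s, exp (-t * μ[X i] + t ^ 2 * μ[fun ω => X i ω ^ 2] / 2) :=
      Finset.prod_le_prod (fun _ _ => mgf_nonneg)
        fun i _ => mgf_neg_le_exp_of_nonneg (hX i) (hX0 i) (hX2 i) ht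
    _ = _ := by
      rw [← exp_sum, Finset.sum_add_distrib, ← Finset.mul_sum, ← Finset.sum_div, ← Finset.mul_sum,
        hmean]

-- Chernoff's bound at the optimal parameter `t = a / v`.
lemma measureReal_le_sub_le_exp_of_mgf_neg_le [IsProbabilityMeasure μ] {S : Ω → ℝ} {m v a : ℝ}
    (ha : 0 ≤ a) (hint : ∀ t, 0 ≤ t → Integrable (fun ω => exp (-t * S ω)) μ)
    (hmgf : ∀ t, 0 ≤ t → mgf S μ (-t) ≤ exp (-t * m + t ^ 2 * v / 2)) :
    μ.real {ω | S ω ≤ m - a} ≤ exp (-a ^ 2 / (2 * v)) := by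
  rcases le_or_gt v 0 with hv | hv
  · refine measureReal_le_one.trans (one_le_exp ?_)
    exact div_nonneg_of_nonpos (by nlinarith) (by linarith)
  have ht : 0 ≤ a / v := div_nonneg ha hv.le
  calc μ.real {ω | S ω ≤ m - a}
      ≤ exp (-(-(a / v)) * (m - a)) * mgf S μ (-(a / v)) :=
        measure_le_le_exp_mul_mgf _ (neg_nonpos.2 ht) (hint _ ht)
    _ ≤ exp (a / v * (m - a)) * exp (-(a / v) * m + (a / v) ^ 2 * v / 2) := by
        rw [neg_neg]
        gcongr
        exact hmgf _ ht
    _ = exp (-a ^ 2 / (2 * v)) := by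
        rw [← exp_add]
        congr 1
        field_simp
        ring

end ProbabilityTheory

end

theorem maurer_inequality_general {Ω : Type*} [MeasurableSpace Ω] (μpr : Measure Ω)
    [IsProbabilityMeasure μpr] (N : ℕ) (X : Fin N → Ω → ℝ)
    (hmeas : ∀ i, Measurable (X i))
    (hindep : iIndepFun X μpr)
    (hnonneg : ∀ i ω, 0 ≤ X i ω)
    (hint2 : ∀ i, Integrable (fun ω => (X i ω) ^ 2) μpr)
    (S : Ω → ℝ) (hS : ∀ ω, S ω = ∑ i, X i ω) (x : ℝ) (hx : 0 < x) :
    (μpr {ω | S ω ≤ (∫ ω, S ω ∂μpr) - N * x}).toReal ≤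
      Real.exp (-(N : ℝ) ^ 2 * x ^ 2 / (2 * ∑ i, ∫ ω, (X i ω) ^ 2 ∂μpr)) := by
  obtain rfl : S = ∑ i, X i := funext fun ω => by rw [hS, Finset.sum_apply]
  have hX : ∀ i, AEMeasurable (X i) μpr := fun i => (hmeas i).aemeasurable
  have hX0 : ∀ i, ∀ᵐ ω ∂μpr, 0 ≤ X i ω := fun i => ae_of_all _ (hnonneg i)
  have hS0 : ∀ᵐ ω ∂μpr, 0 ≤ (∑ i, X i) ω := ae_of_all _ fun ω => by
    simpa only [Finset.sum_apply] using Finset.sum_nonneg fun i _ => hnonneg i ω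
  have hbound := measureReal_le_sub_le_exp_of_mgf_neg_le (μ := μpr) (S := ∑ i, X i)
    (mul_nonneg (Nat.cast_nonneg N) hx.le)
    (fun t ht =>
      integrable_exp_neg_mul_of_nonneg (Finset.aemeasurable_sum _ fun i _ => hX i) hS0 ht)
    (fun t ht => hindep.mgf_neg_sum_le_exp_of_nonneg hX hX0 hint2 Finset.univ ht)
  rwa [mul_pow, ← neg_mul] at hbound

theorem maurer_inequality {Ω : Type*} [MeasurableSpace Ω] (μpr : Measure Ω)
    [IsProbabilityMeasure μpr] (N : ℕ) (hN : 1 ≤ N) (X : Fin N → Ω → ℝ)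
    (hmeas : ∀ i, Measurable (X i))
    (hindep : iIndepFun X μpr)
    (hnonneg : ∀ i ω, 0 ≤ X i ω)
    (hint2 : ∀ i, Integrable (fun ω => (X i ω) ^ 2) μpr)
    (S : Ω → ℝ) (hS : ∀ ω, S ω = ∑ i, X i ω) (x : ℝ) (hx : 0 < x) :
    (μpr {ω | S ω ≤ (∫ ω, S ω ∂μpr) - N * x}).toReal ≤
      Real.exp (-(N : ℝ) ^ 2 * x ^ 2 / (2 * ∑ i, ∫ ω, (X i ω) ^ 2 ∂μpr)) :=
  maurer_inequality_general μpr N X hmeas hindep hnonneg hint2 S hS x hx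
end

section
/- Let X₁, …, X_n be i.i.d. nonnegative random variables with common cdf F satisfying 1 − F(x) ~ c₀·x^{−ν}/Γ(1−ν) as x → ∞, where 0 < ν < 1 and c₀ > 0. Let I_n = X₁ + ⋯ + X_n and M_n = max{X₁,…,X_n}. If E[M_n/I_n] → 1 − ν and the limiting distribution of I_n/M_n is non-degenerate, then liminf_{n→∞} Pr[M_n/I_n ≥ 1 − ν] > 0. -/
/-! A "single big jump" argument. Put `T = (k n)^{1/ν}`. Truncating at `T` and applying
Markov's inequality, a sum of at most `n` of the variables exceeds `T` with probability
`≤ n (P(X > T) + E[min(X, T)] / T)`, which is `O(1/k) + o(1)` because the truncated mean is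
`O(T^{1-ν})`; so for large `k` it is at most `1/2`. On the pairwise disjoint events
`{X_i > T/ν} ∩ {∑_{j ≠ i} X_j ≤ T}` the maximum carries at least the fraction `1 - ν` of the sum,
and by independence each of these events has probability `≥ P(X > T/ν) / 2 ≍ 1/n`, so their union
has probability bounded away from zero. -/

open MeasureTheory ProbabilityTheory Filter Real

open Set Topology

theorem eventually_half_le_and_le_two_mul_of_tendsto_div {α : Type*} {l : Filter α}
    {f g : α → ℝ} (hg : ∀ᶠ x in l, 0 < g x) (h : Tendsto (fun x ↦ f x / g x) l (𝓝 1)) :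
    ∀ᶠ x in l, g x / 2 ≤ f x ∧ f x ≤ 2 * g x := by
  filter_upwards [hg, h.eventually (Ioo_mem_nhds (by norm_num : (1 / 2 : ℝ) < 1) one_lt_two)]
    with x hgx hx
  rw [lt_div_iff₀ hgx, div_lt_iff₀ hgx] at hx
  constructor <;> linarith

theorem tendsto_mul_natCast_rpow_inv_atTop {k ν : ℝ} (hk : 0 < k) (hν : 0 < ν) :
    Tendsto (fun n : ℕ ↦ (k * n) ^ ν⁻¹) atTop atTop :=
  (tendsto_rpow_atTop (inv_pos.2 hν)).comp
    (tendsto_natCast_atTop_atTop.const_mul_atTop hk)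

theorem one_sub_le_iSup_div_sum {x : ℕ → ℝ} (hx : ∀ j, 0 ≤ x j) {n i : ℕ} (hi : i < n)
    {ν : ℝ} (hrest : ∑ j ∈ (Finset.range n).erase i, x j < ν * x i) :
    1 - ν ≤ (⨆ j : Fin n, x j) / ∑ j ∈ Finset.range n, x j := by
  have hS0 : 0 ≤ ∑ j ∈ (Finset.range n).erase i, x j := Finset.sum_nonneg fun j _ ↦ hx j
  have hsum : ∑ j ∈ Finset.range n, x j = x i + ∑ j ∈ (Finset.range n).erase i, x j :=
    (Finset.add_sum_erase _ _ (Finset.mem_range.2 hi)).symm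
  have hmax : x i ≤ ⨆ j : Fin n, x j :=
    le_ciSup (f := fun j : Fin n ↦ x j) (Set.finite_range _).bddAbove ⟨i, hi⟩
  have hxi : 0 < x i := (hx i).lt_of_ne fun h ↦ by rw [← h, mul_zero] at hrest; linarith
  have hν : 0 < ν := pos_of_mul_pos_left (hS0.trans_lt hrest) (hx i)
  rw [le_div_iff₀ (by linarith), hsum]
  nlinarith

section

variable {Ω : Type*} [MeasurableSpace Ω] {μ : Measure Ω}

theorem integrable_min_const [IsFiniteMeasure μ] {Y : Ω → ℝ} (hY : Measurable Y)
    (hY0 : ∀ ω, 0 ≤ Y ω) {T : ℝ} (hT : 0 ≤ T) : Integrable (fun ω ↦ min (Y ω) T) μ :=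
  .of_bound (hY.min measurable_const).aestronglyMeasurable T <| ae_of_all _ fun ω ↦ by
    rw [Real.norm_of_nonneg (le_min (hY0 ω) hT)]
    exact min_le_right _ _

theorem integral_min_le_of_tail_le [IsProbabilityMeasure μ] {Y : Ω → ℝ} (hY : Measurable Y)
    (hY0 : ∀ ω, 0 ≤ Y ω) {ν C x₀ T : ℝ} (hν1 : ν < 1) (hC : 0 ≤ C) (hx₀ : 0 < x₀) (hT : x₀ ≤ T)
    (htail : ∀ t, x₀ ≤ t → μ.real {ω | t < Y ω} ≤ C * t ^ (-ν)) :
    ∫ ω, min (Y ω) T ∂μ ≤ x₀ + C / (1 - ν) * T ^ (1 - ν) := by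
  set G : ℝ → ℝ := fun t ↦ μ.real {ω | t < Y ω}
  have hG : Antitone G := fun s t hst ↦ measureReal_mono fun ω hω ↦ hst.trans_lt hω
  have hT0 : 0 < T := hx₀.trans_le hT
  have hlayer : ∫ ω, min (Y ω) T ∂μ = ∫ t in 0..T, G t := by
    rw [(integrable_min_const hY hY0 hT0.le).integral_eq_integral_meas_lt
        (ae_of_all _ fun ω ↦ le_min (hY0 ω) hT0.le),
      setIntegral_eq_of_subset_of_forall_sdiff_eq_zero measurableSet_Ioi
        (Ioo_subset_Ioi_self : Ioo (0 : ℝ) T ⊆ Ioi 0),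
      intervalIntegral.integral_of_le hT0.le, integral_Ioc_eq_integral_Ioo]
    · refine setIntegral_congr_fun measurableSet_Ioo fun t ht ↦ ?_
      simp only [G, lt_min_iff, ht.2, and_true]
    · intro t ht
      have hTt : T ≤ t := by
        simp only [Set.mem_sdiff, mem_Ioi, mem_Ioo, not_and, not_lt] at ht
        exact ht.2 ht.1
      simp [not_lt.2 hTt]
  have hnear : ∫ t in 0..x₀, G t ≤ x₀ := by
    calc ∫ t in 0..x₀, G t ≤ ∫ _ in 0..x₀, (1 : ℝ) :=
          intervalIntegral.integral_mono_on hx₀.le hG.intervalIntegrable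
            intervalIntegrable_const fun t _ ↦ measureReal_le_one
      _ = x₀ := by simp
  have hfar : ∫ t in x₀..T, G t ≤ C / (1 - ν) * T ^ (1 - ν) := by
    calc ∫ t in x₀..T, G t ≤ ∫ t in x₀..T, C * t ^ (-ν) :=
          intervalIntegral.integral_mono_on hT hG.intervalIntegrable
            ((intervalIntegral.intervalIntegrable_rpow' (by linarith)).const_mul C)
            fun t ht ↦ htail t ht.1
      _ = C / (1 - ν) * (T ^ (1 - ν) - x₀ ^ (1 - ν)) := by
          rw [intervalIntegral.integral_const_mul, integral_rpow (Or.inl (by linarith)),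
            neg_add_eq_sub]
          ring
      _ ≤ C / (1 - ν) * T ^ (1 - ν) :=
          mul_le_mul_of_nonneg_left (sub_le_self _ (rpow_nonneg hx₀.le _))
            (div_nonneg hC (by linarith))
  rw [hlayer, ← intervalIntegral.integral_add_adjacent_intervals hG.intervalIntegrable
    hG.intervalIntegrable]
  exact add_le_add hnear hfar

theorem measureReal_lt_sum_le {ι : Type*} [IsFiniteMeasure μ] {X : ι → Ω → ℝ}
    (hX : ∀ i, Measurable (X i)) (hX0 : ∀ i ω, 0 ≤ X i ω) (s : Finset ι) {T : ℝ} (hT : 0 < T) :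
    μ.real {ω | T < ∑ j ∈ s, X j ω} ≤
      ∑ j ∈ s, (μ.real {ω | T < X j ω} + (∫ ω, min (X j ω) T ∂μ) / T) := by
  set f : Ω → ℝ := fun ω ↦ ∑ j ∈ s, min (X j ω) T
  have hint : ∀ j ∈ s, Integrable (fun ω ↦ min (X j ω) T) μ :=
    fun j _ ↦ integrable_min_const (hX j) (hX0 j) hT.le
  have hsub : {ω | T < ∑ j ∈ s, X j ω} ⊆ (⋃ j ∈ s, {ω | T < X j ω}) ∪ {ω | T ≤ f ω} := by
    intro ω hω
    by_cases hbig : ∃ j ∈ s, T < X j ω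
    · obtain ⟨j, hj, hTj⟩ := hbig
      exact Or.inl (mem_biUnion hj hTj)
    · push Not at hbig
      refine Or.inr (le_of_lt (?_ : T < ∑ j ∈ s, min (X j ω) T))
      rwa [Finset.sum_congr rfl fun j hj ↦ min_eq_left (hbig j hj)]
  have hmarkov : μ.real {ω | T ≤ f ω} ≤ ∑ j ∈ s, (∫ ω, min (X j ω) T ∂μ) / T := by
    rw [← Finset.sum_div, ← integral_finsetSum s hint, le_div_iff₀ hT, mul_comm]
    exact mul_meas_ge_le_integral_of_nonneg
      (ae_of_all _ fun ω ↦ Finset.sum_nonneg fun j _ ↦ le_min (hX0 j ω) hT.le)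
      (integrable_finsetSum s hint) T
  calc μ.real {ω | T < ∑ j ∈ s, X j ω}
      ≤ μ.real ((⋃ j ∈ s, {ω | T < X j ω}) ∪ {ω | T ≤ f ω}) := measureReal_mono hsub
    _ ≤ μ.real (⋃ j ∈ s, {ω | T < X j ω}) + μ.real {ω | T ≤ f ω} := measureReal_union_le _ _
    _ ≤ ∑ j ∈ s, μ.real {ω | T < X j ω} + ∑ j ∈ s, (∫ ω, min (X j ω) T ∂μ) / T :=
        add_le_add (measureReal_biUnion_finset_le _ _) hmarkov
    _ = _ := Finset.sum_add_distrib.symm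

theorem measureReal_lt_sum_le_of_tail_le {ι : Type*} [IsProbabilityMeasure μ]
    {X : ι → Ω → ℝ} (hX : ∀ i, Measurable (X i)) (hX0 : ∀ i ω, 0 ≤ X i ω) (s : Finset ι)
    {ν C x₀ T : ℝ} (hν1 : ν < 1) (hC : 0 ≤ C) (hx₀ : 0 < x₀) (hT : x₀ ≤ T)
    (htail : ∀ j t, x₀ ≤ t → μ.real {ω | t < X j ω} ≤ C * t ^ (-ν)) :
    μ.real {ω | T < ∑ j ∈ s, X j ω} ≤
      s.card * (x₀ / T + C * (2 - ν) / (1 - ν) * T ^ (-ν)) := by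
  have hT0 : 0 < T := hx₀.trans_le hT
  refine (measureReal_lt_sum_le hX hX0 s hT0).trans ?_
  rw [← nsmul_eq_mul]
  refine Finset.sum_le_card_nsmul _ _ _ fun j _ ↦ ?_
  have hmean := integral_min_le_of_tail_le (hX j) (hX0 j) hν1 hC hx₀ hT (htail j)
  have hpow : T ^ (1 - ν) / T = T ^ (-ν) := by
    rw [← rpow_sub_one hT0.ne', sub_sub_cancel_left]
  calc μ.real {ω | T < X j ω} + (∫ ω, min (X j ω) T ∂μ) / T
      ≤ C * T ^ (-ν) + (x₀ + C / (1 - ν) * T ^ (1 - ν)) / T := by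
        gcongr
        exact htail j T hT
    _ = x₀ / T + C * (2 - ν) / (1 - ν) * T ^ (-ν) := by
        have h1ν : 1 - ν ≠ 0 := by linarith
        rw [add_div, mul_div_assoc, hpow]
        field_simp
        ring

theorem eventually_measureReal_lt_sum_le_half {ι : Type*} [IsProbabilityMeasure μ]
    {X : ι → Ω → ℝ} (hX : ∀ i, Measurable (X i))
    (hX0 : ∀ i ω, 0 ≤ X i ω) {ν C x₀ k : ℝ} (hν : 0 < ν) (hν1 : ν < 1) (hC : 0 ≤ C)
    (hx₀ : 0 < x₀) (htail : ∀ j t, x₀ ≤ t → μ.real {ω | t < X j ω} ≤ C * t ^ (-ν))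
    (hk0 : 0 < k) (hk : C * (2 - ν) / (1 - ν) ≤ k / 4) :
    ∀ᶠ n : ℕ in atTop, ∀ s : Finset ι, s.card ≤ n →
      μ.real {ω | (k * n) ^ ν⁻¹ < ∑ j ∈ s, X j ω} ≤ 1 / 2 := by
  set T : ℕ → ℝ := fun n ↦ (k * n) ^ ν⁻¹
  have hT := tendsto_mul_natCast_rpow_inv_atTop hk0 hν
  have hsmall : Tendsto (fun n ↦ x₀ / k * T n ^ (ν - 1)) atTop (𝓝 0) := by
    simpa [neg_sub] using
      ((tendsto_rpow_neg_atTop (by linarith : 0 < 1 - ν)).comp hT).const_mul (x₀ / k)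
  filter_upwards [hT.eventually_ge_atTop x₀,
    hsmall.eventually (eventually_le_nhds (by norm_num : (0 : ℝ) < 1 / 4))]
    with n hx₀T hsmall_n s hs
  have hT0 : 0 < T n := hx₀.trans_le hx₀T
  have hn : (n : ℝ) = T n ^ ν / k := by
    rw [rpow_inv_rpow (by positivity) hν.ne']
    field_simp
  have hC' : C * (2 - ν) / (1 - ν) / k ≤ 1 / 4 := by
    rwa [div_le_iff₀ hk0, div_mul_eq_mul_div, one_mul]
  calc μ.real {ω | T n < ∑ j ∈ s, X j ω}
      ≤ s.card * (x₀ / T n + C * (2 - ν) / (1 - ν) * T n ^ (-ν)) :=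
        measureReal_lt_sum_le_of_tail_le hX hX0 s hν1 hC hx₀ hx₀T htail
    _ ≤ n * (x₀ / T n + C * (2 - ν) / (1 - ν) * T n ^ (-ν)) := by
        have : 0 ≤ C * (2 - ν) / (1 - ν) := div_nonneg (by nlinarith) (by linarith)
        gcongr
    _ = x₀ / k * T n ^ (ν - 1) + C * (2 - ν) / (1 - ν) / k := by
        rw [hn, rpow_sub_one hT0.ne', rpow_neg hT0.le]
        field_simp
    _ ≤ 1 / 4 + 1 / 4 := add_le_add hsmall_n hC'
    _ = 1 / 2 := by norm_num

variable {X : ℕ → Ω → ℝ}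

theorem sum_mul_le_measureReal_one_sub_le_iSup_div_sum [IsFiniteMeasure μ]
    (hX : ∀ i, Measurable (X i)) (hindep : iIndepFun X μ) (hX0 : ∀ i ω, 0 ≤ X i ω)
    {ν β : ℝ} (hν : 0 < ν) (hν1 : ν ≤ 1) (hβ : 0 ≤ β) (n : ℕ) :
    ∑ i ∈ Finset.range n, μ.real {ω | β < X i ω} *
        μ.real {ω | ∑ j ∈ (Finset.range n).erase i, X j ω ≤ ν * β} ≤
      μ.real {ω | 1 - ν ≤ (⨆ i : Fin n, X i ω) / ∑ i ∈ Finset.range n, X i ω} := by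
  set A : ℕ → Set Ω := fun i ↦
    {ω | β < X i ω} ∩ {ω | ∑ j ∈ (Finset.range n).erase i, X j ω ≤ ν * β}
  have hA_meas : ∀ i, MeasurableSet (A i) := fun i ↦
    (measurableSet_lt measurable_const (hX i)).inter
      (measurableSet_le (Finset.measurable_sum _ fun j _ ↦ hX j) measurable_const)
  have hA_prod : ∀ i, μ.real (A i) = μ.real {ω | β < X i ω} *
      μ.real {ω | ∑ j ∈ (Finset.range n).erase i, X j ω ≤ ν * β} := by
    intro i
    have hindep_i : IndepFun (X i) (∑ j ∈ (Finset.range n).erase i, X j) μ :=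
      (hindep.indepFun_finsetSum_of_notMem hX (Finset.notMem_erase i _)).symm
    have h := hindep_i.measure_inter_preimage_eq_mul _ _
      (measurableSet_Ioi (a := β)) (measurableSet_Iic (a := ν * β))
    simp only [preimage, mem_Ioi, mem_Iic, Finset.sum_apply] at h
    simp only [measureReal_def, A, h, ENNReal.toReal_mul]
  have hA_disj : (Finset.range n : Set ℕ).PairwiseDisjoint A := by
    intro i _ j hj hij
    refine Set.disjoint_left.2 fun ω hωi hωj ↦ ?_
    have hXj : X j ω ≤ ∑ l ∈ (Finset.range n).erase i, X l ω :=
      Finset.single_le_sum (fun l _ ↦ hX0 l ω)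
        (Finset.mem_erase.2 ⟨hij.symm, Finset.mem_coe.1 hj⟩)
    have : ν * β ≤ β := mul_le_of_le_one_left hβ hν1
    exact absurd ((hωj.1 : β < X j ω).trans_le (hXj.trans hωi.2)) (by simpa using this)
  have hA_sub : (⋃ i ∈ Finset.range n, A i) ⊆
      {ω | 1 - ν ≤ (⨆ i : Fin n, X i ω) / ∑ i ∈ Finset.range n, X i ω} := by
    simp only [iUnion_subset_iff]
    rintro i hi ω ⟨hbig : β < X i ω, hrest⟩
    exact one_sub_le_iSup_div_sum (fun j ↦ hX0 j ω) (Finset.mem_range.1 hi)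
      (hrest.trans_lt (mul_lt_mul_of_pos_left hbig hν))
  calc _ = ∑ i ∈ Finset.range n, μ.real (A i) := Finset.sum_congr rfl fun i _ ↦ (hA_prod i).symm
    _ = μ.real (⋃ i ∈ Finset.range n, A i) :=
        (measureReal_biUnion_finset hA_disj fun i _ ↦ hA_meas i).symm
    _ ≤ _ := measureReal_mono hA_sub

theorem exists_pos_eventually_le_measureReal_one_sub_le_iSup_div_sum [IsProbabilityMeasure μ]
    (hX : ∀ i, Measurable (X i)) (hindep : iIndepFun X μ) (hX0 : ∀ i ω, 0 ≤ X i ω)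
    {ν b C x₀ : ℝ} (hν : 0 < ν) (hν1 : ν < 1) (hb : 0 < b) (hC : 0 ≤ C) (hx₀ : 0 < x₀)
    (hlow : ∀ j t, x₀ ≤ t → b * t ^ (-ν) ≤ μ.real {ω | t < X j ω})
    (hup : ∀ j t, x₀ ≤ t → μ.real {ω | t < X j ω} ≤ C * t ^ (-ν)) :
    ∃ δ > 0, ∀ᶠ n : ℕ in atTop,
      δ ≤ μ.real {ω | 1 - ν ≤ (⨆ i : Fin n, X i ω) / ∑ i ∈ Finset.range n, X i ω} := by
  set k := 4 * (C * (2 - ν) / (1 - ν)) + 1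
  have hk0 : 0 < k := by
    have : 0 ≤ C * (2 - ν) / (1 - ν) := div_nonneg (by nlinarith) (by linarith)
    linarith
  refine ⟨b * ν ^ ν / (2 * k), by positivity, ?_⟩
  filter_upwards [eventually_measureReal_lt_sum_le_half hX hX0 hν hν1 hC hx₀ hup hk0
      (by linarith), (tendsto_mul_natCast_rpow_inv_atTop hk0 hν).eventually_ge_atTop x₀,
    eventually_gt_atTop 0] with n hrest hx₀T hn
  set T := (k * n) ^ ν⁻¹
  have hT0 : 0 < T := hx₀.trans_le hx₀T
  have hhalf : ∀ i,
      1 / 2 ≤ μ.real {ω | ∑ j ∈ (Finset.range n).erase i, X j ω ≤ ν * (T / ν)} := by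
    intro i
    rw [mul_div_cancel₀ _ hν.ne']
    have hcompl := probReal_compl_eq_one_sub (μ := μ)
      (measurableSet_le (Finset.measurable_sum _ fun j _ ↦ hX j) measurable_const :
        MeasurableSet {ω | ∑ j ∈ (Finset.range n).erase i, X j ω ≤ T})
    simp only [compl_ofPred, not_le] at hcompl
    linarith [hrest _ (Finset.card_erase_le.trans (Finset.card_range n).le :
      ((Finset.range n).erase i).card ≤ n)]
  have hbig : ∀ i, b * ν ^ ν / (k * n) ≤ μ.real {ω | T / ν < X i ω} := by
    intro i
    have hpow : (T / ν) ^ (-ν) = ν ^ ν / (k * n) := by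
      rw [div_rpow hT0.le hν.le, rpow_neg hT0.le, rpow_neg hν.le,
        rpow_inv_rpow (by positivity) hν.ne', inv_div_inv]
    rw [mul_div_assoc, ← hpow]
    exact hlow i _ (hx₀T.trans (le_div_self hT0.le hν hν1.le))
  calc b * ν ^ ν / (2 * k) = ∑ _i ∈ Finset.range n, b * ν ^ ν / (k * n) * (1 / 2) := by
        rw [Finset.sum_const, Finset.card_range, nsmul_eq_mul]
        field_simp
    _ ≤ ∑ i ∈ Finset.range n, μ.real {ω | T / ν < X i ω} *
          μ.real {ω | ∑ j ∈ (Finset.range n).erase i, X j ω ≤ ν * (T / ν)} :=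
        Finset.sum_le_sum fun i _ ↦
          mul_le_mul (hbig i) (hhalf i) (by norm_num) measureReal_nonneg
    _ ≤ _ := sum_mul_le_measureReal_one_sub_le_iSup_div_sum hX hindep hX0 hν hν1.le
        (by positivity) n

end

theorem pareto_tail_sinr_positive_general {Ω : Type*} [MeasurableSpace Ω] (μpr : Measure Ω)
    [IsProbabilityMeasure μpr] (X : ℕ → Ω → ℝ)
    (hmeas : ∀ i, Measurable (X i))
    (hindep : iIndepFun X μpr)
    (hident : ∀ i j, IdentDistrib (X i) (X j) μpr μpr)
    (hnonneg : ∀ i ω, 0 ≤ X i ω)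
    (ν c₀ : ℝ) (hν : 0 < ν) (hν1 : ν < 1) (hc₀ : 0 < c₀)
    (F : ℝ → ℝ) (hF : ∀ x, F x = (μpr {ω | X 0 ω ≤ x}).toReal)
    (htail : Tendsto (fun x : ℝ => (1 - F x) / (c₀ * x ^ (-ν) / Real.Gamma (1 - ν)))
      atTop (nhds 1))
    (I M : ℕ → Ω → ℝ)
    (hI : ∀ n ω, I n ω = ∑ i ∈ Finset.range n, X i ω)
    (hM : ∀ n ω, M n ω = ⨆ i : Fin n, X i ω) :
    0 < Filter.liminf (fun n : ℕ => (μpr {ω | 1 - ν ≤ M n ω / I n ω}).toReal) atTop := by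
  set a := c₀ / Gamma (1 - ν)
  have ha : 0 < a := div_pos hc₀ (Gamma_pos_of_pos (by linarith))
  have htail₀ : Tendsto (fun x ↦ μpr.real {ω | x < X 0 ω} / (a * x ^ (-ν))) atTop (𝓝 1) := by
    refine htail.congr fun x ↦ ?_
    rw [hF, ← measureReal_def,
      ← probReal_compl_eq_one_sub (measurableSet_le (hmeas 0) measurable_const), compl_ofPred]
    simp only [not_le, a]
    ring
  obtain ⟨x₁, hx₁⟩ := eventually_atTop.1 <| eventually_half_le_and_le_two_mul_of_tendsto_div
    ((eventually_gt_atTop 0).mono fun x hx ↦ by positivity) htail₀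
  have hbounds : ∀ j t, max x₁ 1 ≤ t →
      a / 2 * t ^ (-ν) ≤ μpr.real {ω | t < X j ω} ∧
        μpr.real {ω | t < X j ω} ≤ 2 * a * t ^ (-ν) := by
    intro j t ht
    rw [show μpr.real {ω | t < X j ω} = μpr.real {ω | t < X 0 ω} from
      congrArg ENNReal.toReal ((hident j 0).measure_mem_eq measurableSet_Ioi)]
    obtain ⟨hlow, hup⟩ := hx₁ t (le_of_max_le_left ht)
    constructor <;> linarith
  obtain ⟨δ, hδ, hev⟩ := exists_pos_eventually_le_measureReal_one_sub_le_iSup_div_sum hmeas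
    hindep hnonneg hν hν1 (by positivity) (by positivity) (one_pos.trans_le (le_max_right _ _))
    (fun j t ht ↦ (hbounds j t ht).1) (fun j t ht ↦ (hbounds j t ht).2)
  refine hδ.trans_le
    (le_liminf_of_le (isCoboundedUnder_ge_of_le atTop fun _ ↦ measureReal_le_one) ?_)
  simpa only [hI, hM, measureReal_def] using hev

theorem pareto_tail_sinr_positive {Ω : Type*} [MeasurableSpace Ω] (μpr : Measure Ω)
    [IsProbabilityMeasure μpr] (X : ℕ → Ω → ℝ)
    (hmeas : ∀ i, Measurable (X i))
    (hindep : iIndepFun X μpr)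
    (hident : ∀ i j, IdentDistrib (X i) (X j) μpr μpr)
    (hnonneg : ∀ i ω, 0 ≤ X i ω)
    (ν c₀ : ℝ) (hν : 0 < ν) (hν1 : ν < 1) (hc₀ : 0 < c₀)
    (F : ℝ → ℝ) (hF : ∀ x, F x = (μpr {ω | X 0 ω ≤ x}).toReal)
    (htail : Tendsto (fun x : ℝ => (1 - F x) / (c₀ * x ^ (-ν) / Real.Gamma (1 - ν)))
      atTop (nhds 1))
    (I M : ℕ → Ω → ℝ)
    (hI : ∀ n ω, I n ω = ∑ i ∈ Finset.range n, X i ω)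
    (hM : ∀ n ω, M n ω = ⨆ i : Fin n, X i ω)
    (hEratio : Tendsto (fun n : ℕ => ∫ ω, M n ω / I n ω ∂μpr) atTop (nhds (1 - ν)))
    (hnondegen : ¬ ∃ c : ℝ, ∀ ε > (0 : ℝ),
      Tendsto (fun n : ℕ => (μpr {ω | ε < |I n ω / M n ω - c|}).toReal) atTop (nhds 0)) :
    0 < Filter.liminf (fun n : ℕ => (μpr {ω | 1 - ν ≤ M n ω / I n ω}).toReal) atTop :=
  pareto_tail_sinr_positive_general μpr X hmeas hindep hident hnonneg ν c₀ hν hν1 hc₀ F hF htail I M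
    hI hM
end
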